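/- arXiv:2604.06031 — 7 statements merged into one kernel-verified Lean document; each statement's English description precedes it below -/
import Mathlib

section
/- (Ditor) Let n be a positive integer and let κ be an infinite cardinal. If P is a join-semilattice of breadth at most n in which every principal ideal {y ∈ P : y ≤ x} has cardinality strictly less than κ, then the cardinality of P is at most κ^{+(n-1)}, the (n-1)-st successor cardinal of κ. -/
/-!
Call a family `b : I → P` over a well-order *free over `a`* if no `b i` lies in the ideal
generated by `a` and the earlier terms, and a finite set `X` *irredundant over `a`* if no
`x ∈ X` lies in the ideal generated by `a` and `X \ {x}`. Breadth `≤ n` forbids irredundant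
sets of size `n + 1`.

An ideal generated by `ν ≥ κ` elements has at most `ν` elements. So if `|P| > κ^{+(n-1)}`,
well-ordering `P` and keeping the elements outside the ideal generated by `a` and their
predecessors yields a free family of length `> κ^{+(n-1)}` (the others are generated by the
kept ones, by induction). From a free family of length `> κ^{+m}` we get an irredundant set
of size `m + 2`: choose `η` with exactly `κ^{+m}` predecessors and prune these over the
larger base `a ⊔ b η`. By the same count the survivors form a free family of length
`> κ^{+(m-1)}`, and adding `b η` to an irredundant set found among them keeps it
irredundant. For `m = 0` some predecessor survives, as `Iic (a ⊔ b η)` has fewer than `κ`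
elements. Raising the base from `a` to `a ⊔ b η` plays the role of Ditor's passage to the
upper set `Ici (b η)`.
-/

open Cardinal Set Order

universe u

def HasBreadthAtMost (P : Type*) [SemilatticeSup P] (n : ℕ) : Prop :=
  ∀ (X : Finset P) (hX : X.Nonempty),
    ∃ (Y : Finset P) (hY : Y.Nonempty), Y ⊆ X ∧ Y.card ≤ n ∧ X.sup' hX id = Y.sup' hY id

section IdealClosure

variable {P : Type*} [SemilatticeSup P] {s t : Set P} {a x : P}

def idealClosure (s : Set P) : Set P := lowerClosure (supClosure s)

theorem subset_idealClosure : s ⊆ idealClosure s :=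
  subset_supClosure.trans subset_lowerClosure

theorem idealClosure_mono (h : s ⊆ t) : idealClosure s ⊆ idealClosure t :=
  lowerClosure_mono (supClosure_mono h)

theorem supClosed_idealClosure : SupClosed (idealClosure s) := by
  rintro x ⟨y, hy, hxy⟩ x' ⟨y', hy', hxy'⟩
  exact ⟨y ⊔ y', supClosed_supClosure hy hy', sup_le_sup hxy hxy'⟩

theorem isLowerSet_idealClosure : IsLowerSet (idealClosure s) :=
  (lowerClosure _).lower

theorem idealClosure_subset_idealClosure (h : s ⊆ idealClosure t) :
    idealClosure s ⊆ idealClosure t :=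
  lowerClosure_min (supClosure_min h supClosed_idealClosure) (lowerClosure _).lower

@[simp]
theorem idealClosure_singleton : idealClosure {a} = Iic a := by
  simp [idealClosure]

theorem mk_supClosure_le (s : Set P) : #(supClosure s) ≤ max ℵ₀ #s := by
  classical
  have hs : supClosure s ⊆ range fun t : {t : Finset s // t.Nonempty} => t.1.sup' t.2 (↑) := by
    rintro _ ⟨t, ht, hts, rfl⟩
    have hmap : (t.subtype (· ∈ s)).map (Function.Embedding.subtype _) = t :=
      Finset.subtype_map_of_mem fun x hx => hts hx
    have hne : (t.subtype (· ∈ s)).Nonempty := Finset.map_nonempty.1 (hmap ▸ ht)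
    refine ⟨⟨t.subtype (· ∈ s), hne⟩, ?_⟩
    calc _ = ((t.subtype (· ∈ s)).map (Function.Embedding.subtype _)).sup'
          (Finset.map_nonempty.2 hne) id :=
          (Finset.sup'_map ..).symm
      _ = t.sup' ht id := by congr
  calc #(supClosure s) ≤ #{t : Finset s // t.Nonempty} := (mk_le_mk_of_subset hs).trans mk_range_le
    _ ≤ #(List s) := (mk_subtype_le _).trans (mk_le_of_surjective List.toFinset_surjective)
    _ ≤ max ℵ₀ #s := mk_list_le_max s

theorem mk_idealClosure_le {P : Type u} [SemilatticeSup P] {s : Set P} {κ ν : Cardinal.{u}}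
    (hκ : ℵ₀ ≤ κ) (hprin : ∀ x : P, #(Iic x) ≤ κ) (hκν : κ ≤ ν) (hs : #s ≤ ν) :
    #(idealClosure s) ≤ ν := by
  have hν : ℵ₀ ≤ ν := hκ.trans hκν
  calc #(idealClosure s) = #(⋃ x ∈ supClosure s, Iic x) := by rw [idealClosure, coe_lowerClosure]
    _ ≤ #(supClosure s) * ⨆ x : supClosure s, #(Iic x.1) := mk_biUnion_le _ _
    _ ≤ ν * ν := mul_le_mul' ((mk_supClosure_le s).trans (max_le hν hs))
        (ciSup_le' fun x => (hprin x).trans hκν)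
    _ = ν := mul_eq_self hν

theorem mk_idealClosure_insert_range_le {P ι : Type u} [SemilatticeSup P] {κ ν : Cardinal.{u}}
    (hκ : ℵ₀ ≤ κ) (hprin : ∀ x : P, #(Iic x) ≤ κ) (hκν : κ ≤ ν) (a : P) (f : ι → P)
    (hι : #ι ≤ ν) : #(idealClosure (insert a (range f))) ≤ ν := by
  refine mk_idealClosure_le hκ hprin hκν ?_
  calc #(insert a (range f) : Set P) ≤ #(range f) + 1 := mk_insert_le
    _ ≤ ν + 1 := by gcongr; exact mk_range_le.trans hι
    _ = ν := add_one_eq (hκ.trans hκν)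

end IdealClosure

section FreeFamily

variable {P : Type*} [SemilatticeSup P] {I : Type*} [LinearOrder I] {a c : P} {b : I → P}
  {X : Finset P}

def IsFreeOver (a : P) (b : I → P) : Prop :=
  ∀ i, b i ∉ idealClosure (insert a (b '' Iio i))

def IsIrredundantOver (a : P) (X : Finset P) : Prop :=
  ∀ x ∈ X, x ∉ idealClosure (insert a (↑X \ {x}))

theorem IsFreeOver.injective (hb : IsFreeOver a b) : Function.Injective b :=
  .of_lt_imp_ne fun i j hij hbij => hb j (subset_idealClosure (mem_insert_of_mem _ ⟨i, hij, hbij⟩))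

theorem IsFreeOver.isIrredundantOver_singleton (hb : IsFreeOver a b) (i : I) :
    IsIrredundantOver a {b i} := by
  intro x hx
  rw [Finset.mem_singleton.1 hx, Finset.coe_singleton, sdiff_self]
  exact fun h => hb i (idealClosure_mono (insert_subset_insert (empty_subset _)) h)

theorem IsIrredundantOver.not_le (hX : IsIrredundantOver a X) {x : P} (hx : x ∈ X) : ¬x ≤ a :=
  fun h => hX x hx (isLowerSet_idealClosure h (subset_idealClosure (mem_insert _ _)))

theorem IsIrredundantOver.insert_of_notMem_idealClosure [DecidableEq P]
    (hX : IsIrredundantOver (a ⊔ c) X) (hc : c ∉ idealClosure (insert a ↑X)) :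
    IsIrredundantOver a (insert c X) := by
  intro x hx
  rw [Finset.coe_insert]
  rcases Finset.mem_insert.1 hx with rfl | hx
  · refine fun h => hc (idealClosure_mono (insert_subset_insert ?_) h)
    exact sdiff_singleton_subset_iff.2 subset_rfl
  refine fun h => hX x hx (idealClosure_subset_idealClosure ?_ h)
  have hac : a ⊔ c ∈ idealClosure (insert (a ⊔ c) (↑X \ {x})) :=
    subset_idealClosure (mem_insert _ _)
  rintro y (rfl | hy)
  · exact isLowerSet_idealClosure le_sup_left hac
  rcases insert_sdiff_subset hy with rfl | hy
  · exact isLowerSet_idealClosure le_sup_right hac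
  · exact subset_idealClosure (mem_insert_of_mem _ hy)

theorem IsFreeOver.exists_insert (hb : IsFreeOver a b) {η : I} (hXη : ↑X ⊆ b '' Iio η)
    (hX : IsIrredundantOver (a ⊔ b η) X) :
    ∃ Y : Finset P, Y.card = X.card + 1 ∧ ↑Y ⊆ range b ∧ IsIrredundantOver a Y := by
  classical
  refine ⟨insert (b η) X, Finset.card_insert_of_notMem fun h => hX.not_le h le_sup_right, ?_,
    hX.insert_of_notMem_idealClosure fun h => hb η ?_⟩
  · rw [Finset.coe_insert]
    exact insert_subset (mem_range_self η) (hXη.trans (image_subset_range _ _))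
  · exact idealClosure_mono (insert_subset_insert hXη) h

theorem exists_isFreeOver_restrict [WellFoundedLT I] (a : P) (b : I → P) :
    ∃ K : Set I, IsFreeOver a (fun i : K => b i) ∧
      range b ⊆ idealClosure (insert a (range fun i : K => b i)) := by
  refine ⟨{i | b i ∉ idealClosure (insert a (b '' Iio i))}, fun i h => i.2 ?_, ?_⟩
  · refine idealClosure_mono (insert_subset_insert ?_) h
    rintro _ ⟨j, hj, rfl⟩
    exact ⟨j, hj, rfl⟩
  rintro _ ⟨i, rfl⟩
  induction i using WellFoundedLT.induction with
  | _ i ih =>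
  by_cases hi : b i ∈ idealClosure (insert a (b '' Iio i))
  · refine idealClosure_subset_idealClosure (insert_subset ?_ ?_) hi
    · exact subset_idealClosure (mem_insert _ _)
    · rintro _ ⟨j, hj, rfl⟩
      exact ih j hj
  · exact subset_idealClosure (mem_insert_of_mem _ ⟨⟨i, hi⟩, rfl⟩)

end FreeFamily

theorem exists_mk_Iio_eq {I : Type u} [LinearOrder I] [WellFoundedLT I] {c : Cardinal.{u}}
    (h : c < #I) : ∃ η : I, #(Iio η) = c := by
  have hc : c.ord < Ordinal.type ((· < ·) : I → I → Prop) :=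
    (ord_lt_ord.2 h).trans_le (by rw [ord_le, Ordinal.card_type])
  refine ⟨Ordinal.enum (· < ·) ⟨c.ord, hc⟩, ?_⟩
  change #{y // y < _} = c
  rw [← Ordinal.card_typein, Ordinal.typein_enum, card_ord]

section FreeFamilyCardinal

variable {P I : Type u} [SemilatticeSup P] [LinearOrder I] [WellFoundedLT I] {a : P} {b : I → P}
  {κ : Cardinal.{u}}

theorem IsFreeOver.exists_subfamily_below (hb : IsFreeOver a b) (η : I) :
    ∃ K : Set (Iio η), IsFreeOver (a ⊔ b η) (fun i : K => b i) ∧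
      #(Iio η) ≤ #(idealClosure (insert (a ⊔ b η) (range fun i : K => b i))) := by
  obtain ⟨K, hK, hcover⟩ := exists_isFreeOver_restrict (a ⊔ b η) fun i : Iio η => b i
  refine ⟨K, hK, ?_⟩
  rw [← mk_range_eq _ (hb.injective.comp Subtype.val_injective)]
  exact mk_le_mk_of_subset hcover

theorem IsFreeOver.exists_isIrredundantOver_card_two (hprin : ∀ x : P, #(Iic x) < κ)
    (hb : IsFreeOver a b) (hI : κ < #I) :
    ∃ X : Finset P, X.card = 2 ∧ ↑X ⊆ range b ∧ IsIrredundantOver a X := by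
  obtain ⟨η, hη⟩ := exists_mk_Iio_eq hI
  obtain ⟨K, hK, hcover⟩ := hb.exists_subfamily_below η
  obtain ⟨i⟩ : Nonempty K := by
    by_contra! hK
    rw [range_eq_empty, insert_empty_eq, idealClosure_singleton, hη] at hcover
    exact (hprin _).not_ge hcover
  obtain ⟨X, hXcard, hX⟩ := hb.exists_insert (X := {b i}) (by simpa using ⟨_, i.1.2, rfl⟩)
    (hK.isIrredundantOver_singleton i)
  exact ⟨X, hXcard, hX⟩

theorem IsFreeOver.exists_large_subfamily (hκ : ℵ₀ ≤ κ) (hprin : ∀ x : P, #(Iic x) ≤ κ)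
    (hb : IsFreeOver a b) {ν : Cardinal.{u}} (hκν : κ ≤ ν) (hI : succ ν < #I) :
    ∃ η : I, ∃ K : Set (Iio η), IsFreeOver (a ⊔ b η) (fun i : K => b i) ∧ ν < #K := by
  obtain ⟨η, hη⟩ := exists_mk_Iio_eq hI
  obtain ⟨K, hK, hcover⟩ := hb.exists_subfamily_below η
  refine ⟨η, K, hK, lt_of_not_ge fun hKν => (lt_succ ν).not_ge ?_⟩
  rw [← hη]
  exact hcover.trans (mk_idealClosure_insert_range_le hκ hprin hκν _ _ hKν)

theorem IsFreeOver.exists_isIrredundantOver (hκ : ℵ₀ ≤ κ) (hprin : ∀ x : P, #(Iic x) < κ)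
    (m : ℕ) (hb : IsFreeOver a b) (hI : succ^[m] κ < #I) :
    ∃ X : Finset P, X.card = m + 2 ∧ ↑X ⊆ range b ∧ IsIrredundantOver a X := by
  induction m generalizing I a b with
  | zero => exact hb.exists_isIrredundantOver_card_two hprin hI
  | succ m ih =>
    rw [Function.iterate_succ_apply'] at hI
    obtain ⟨η, K, hK, hmK⟩ :=
      hb.exists_large_subfamily hκ (fun x => (hprin x).le) (le_succ_iterate m κ) hI
    obtain ⟨X, hXcard, hXK, hX⟩ := ih hK hmK
    have hXη : ↑X ⊆ b '' Iio η := hXK.trans (range_subset_iff.2 fun i => ⟨i.1.1, i.1.2, rfl⟩)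
    obtain ⟨Y, hYcard, hY⟩ := hb.exists_insert hXη hX
    exact ⟨Y, by rw [hYcard, hXcard], hY⟩

theorem exists_isFreeOver_of_lt_mk (hκ : ℵ₀ ≤ κ) (hprin : ∀ x : P, #(Iic x) ≤ κ)
    {ν : Cardinal.{u}} (hκν : κ ≤ ν) (hν : ν < #P) (a : P) :
    ∃ (K : Set (#P).ord.ToType) (b : K → P), IsFreeOver a b ∧ ν < #K := by
  obtain ⟨e⟩ : Nonempty ((#P).ord.ToType ≃ P) := Cardinal.eq.1 (mk_ord_toType _)
  obtain ⟨K, hK, hcover⟩ := exists_isFreeOver_restrict a e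
  refine ⟨K, _, hK, lt_of_not_ge fun hKν => hν.not_ge ?_⟩
  calc #P = #(range e) := by rw [e.range_eq_univ, mk_univ]
    _ ≤ _ := mk_le_mk_of_subset hcover
    _ ≤ ν := mk_idealClosure_insert_range_le hκ hprin hκν a _ hKν

end FreeFamilyCardinal

theorem HasBreadthAtMost.card_le_of_isIrredundantOver {P : Type*} [SemilatticeSup P] {n : ℕ}
    (hP : HasBreadthAtMost P n) {a : P} {X : Finset P} (hX : IsIrredundantOver a X) :
    X.card ≤ n := by
  rcases X.eq_empty_or_nonempty with rfl | hne
  · exact Nat.zero_le n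
  obtain ⟨Y, hYne, hYX, hYn, hsup⟩ := hP X hne
  refine le_trans (Finset.card_le_card fun x hx => ?_) hYn
  by_contra hxY
  refine hX x hx (isLowerSet_idealClosure (hsup ▸ X.le_sup' id hx) ?_)
  refine supClosed_idealClosure.finsetSup'_mem hYne fun y hy => subset_idealClosure ?_
  exact mem_insert_of_mem _ ⟨hYX hy, ne_of_mem_of_not_mem hy hxY⟩

theorem ditor_cardinality_bound_general {P : Type u} [SemilatticeSup P] [Nonempty P]
    (n : ℕ) (κ : Cardinal.{u}) (hκ : Cardinal.aleph0 ≤ κ)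
    (hbr : HasBreadthAtMost P n)
    (hprin : ∀ x : P, Cardinal.mk (Set.Iic x) < κ) :
    Cardinal.mk P ≤ Order.succ^[n - 1] κ := by
  by_contra! hP
  obtain ⟨K, b, hb, hK⟩ := exists_isFreeOver_of_lt_mk hκ (fun x => (hprin x).le)
    (le_succ_iterate _ _) hP (Classical.arbitrary P)
  obtain ⟨X, hXcard, -, hX⟩ := hb.exists_isIrredundantOver hκ hprin (n - 1) hK
  have := hbr.card_le_of_isIrredundantOver hX
  omega

/-- Ditor: if `P` is a join-semilattice of breadth at most `n > 0`
whose principal ideals all have cardinality `< κ` (κ infinite), then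
`|P| ≤ κ^{+(n-1)}`, the `(n-1)`-st successor cardinal of `κ`. -/
theorem ditor_cardinality_bound {P : Type u} [SemilatticeSup P] [Nonempty P]
    (n : ℕ) (hn : 0 < n) (κ : Cardinal.{u}) (hκ : Cardinal.aleph0 ≤ κ)
    (hbr : HasBreadthAtMost P n)
    (hprin : ∀ x : P, Cardinal.mk (Set.Iic x) < κ) :
    Cardinal.mk P ≤ Order.succ^[n - 1] κ :=
  ditor_cardinality_bound_general n κ hκ hbr hprin
end

section
/- (Ditor) For every positive integer n, every n-ladder has breadth at most n. -/
/-- `P` is an `n`-ladder: a nonempty lower finite lattice in which every element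
has at most `n` lower covers. -/
def IsNLadder (P : Type*) [Lattice P] (n : ℕ) : Prop :=
  Nonempty P ∧ (∀ x : P, (Set.Iic x).Finite) ∧ ∀ x : P, {y : P | y ⋖ x}.ncard ≤ n

/-!
Let `X` have more than `n` elements and join `s`. If no element of `X` could be dropped
without lowering the join, then each `X \ {x}` would lie below a lower cover `c x` of `s`.
Two distinct `x ≠ y` cannot share a cover, since then `c x` would bound all of `X` and
hence `s`. So `x ↦ c x` injects `X` into the at most `n` lower covers of `s`, which is
absurd. Removing redundant elements one at a time therefore brings `X` down to `n` elements.
-/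

theorem exists_le_covBy_of_lt_of_finite_Iio {α : Type*} [PartialOrder α] {a b : α}
    (hb : (Set.Iio b).Finite) (hab : a < b) : ∃ c, a ≤ c ∧ c ⋖ b := by
  obtain ⟨c, ⟨hac, hcb⟩, hmax⟩ :=
    (hb.subset Set.Ico_subset_Iio_self).exists_maximal ⟨a, le_rfl, hab⟩
  exact ⟨c, hac, hcb, fun d hcd hdb => hcd.not_ge (hmax ⟨hac.trans hcd.le, hdb⟩ hcd.le)⟩

theorem Finset.card_le_ncard_of_forall_erase_mem_upperBounds {α : Type*} [Preorder α]
    [DecidableEq α] {X : Finset α} {T : Set α} (hT : T.Finite)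
    (hX : ∀ c ∈ T, c ∉ upperBounds (X : Set α))
    (herase : ∀ x ∈ X, ∃ c ∈ T, c ∈ upperBounds (X.erase x : Set α)) :
    X.card ≤ T.ncard := by
  choose! c hcT hcub using herase
  have hinj : Set.InjOn c X := by
    intro x hx y hy hxy
    by_contra hne
    refine hX (c x) (hcT x hx) fun z hz => ?_
    obtain rfl | hzx := eq_or_ne z x
    · exact hxy ▸ hcub y hy (Finset.mem_erase.2 ⟨hne, hz⟩)
    · exact hcub x hx (Finset.mem_erase.2 ⟨hzx, hz⟩)
  simpa using Set.ncard_le_ncard_of_injOn c hcT hinj hT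

theorem Finset.exists_sup'_erase_eq_of_ncard_covBy_lt {α : Type*} [Lattice α] [DecidableEq α]
    {X : Finset α} (hX : X.Nonempty) (hfin : (Set.Iio (X.sup' hX id)).Finite)
    (hX₁ : 1 < X.card) (hcard : {c | c ⋖ X.sup' hX id}.ncard < X.card) :
    ∃ x ∈ X, ∃ hx : (X.erase x).Nonempty, (X.erase x).sup' hx id = X.sup' hX id := by
  set s := X.sup' hX id
  by_contra! hirred
  refine hcard.not_ge (card_le_ncard_of_forall_erase_mem_upperBounds
    (hfin.subset fun c hc => hc.lt) (fun c hc hub => hc.lt.not_ge (sup'_le hX id hub)) ?_)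
  intro x hx
  have hne : (X.erase x).Nonempty := by
    rw [← card_pos, card_erase_of_mem hx]
    omega
  have hlt : (X.erase x).sup' hne id < s :=
    (sup'_mono id (erase_subset x X) hne).lt_of_ne (hirred x hx hne)
  obtain ⟨c, hle, hcov⟩ := exists_le_covBy_of_lt_of_finite_Iio hfin hlt
  exact ⟨c, hcov, fun y hy => (le_sup' id hy).trans hle⟩

/-- Ditor: for every positive integer `n`, every `n`-ladder has
breadth at most `n`. -/
theorem ladder_breadth {P : Type*} [Lattice P] (n : ℕ) (hn : 0 < n)
    (h : IsNLadder P n) : HasBreadthAtMost P n := by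
  classical
  obtain ⟨-, hfin, hcov⟩ := h
  intro X hX
  induction X using Finset.strongInduction with
  | H X ih =>
    by_cases hXn : X.card ≤ n
    · exact ⟨X, hX, subset_rfl, hXn, rfl⟩
    obtain ⟨x, hx, hne, hsup⟩ := X.exists_sup'_erase_eq_of_ncard_covBy_lt hX
      ((hfin _).subset Set.Iio_subset_Iic_self) (by omega) ((hcov _).trans_lt (by omega))
    obtain ⟨Y, hY, hYX, hYn, hYsup⟩ := ih _ (Finset.erase_ssubset hx) hne
    exact ⟨Y, hY, hYX.trans (X.erase_subset x), hYn, hsup.symm.trans hYsup⟩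
end

section
/- (Ditor) For every positive integer n, every n-ladder has cardinality at most ℵ_{n-1}. -/
/-!
Suppose `#P > ℵ_{n-1}`, i.e. `#P ≥ ℵ_n`. Assign to each finite `t ⊆ P` the set of elements below
every upper bound of `t`, which is finite by lower finiteness. Kuratowski's free set theorem gives
`n + 1` elements none of which lies below the join of the others. Then their join `b` has, for
each of them, a lower cover above the join of the others, and these `n + 1` covers are distinct.

Kuratowski's theorem itself goes by induction on `n`: inside `#S ≥ ℵ_{n+1}` pick `B₀` of size `ℵ_n`
and close it under the finite-valued map to a set `B` of size `ℵ_n`; any `a₀ ∈ S \ B` can be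
added to a free set in `B₀` for the map `t ↦ f (insert a₀ t)`.
-/

open Cardinal Set

universe u v

namespace Cardinal

theorem mk_iUnion_le_of_le {α : Type u} {ι : Type v} {κ : Cardinal.{u}} (hκ : ℵ₀ ≤ κ)
    {f : ι → Set α} (hι : lift.{u} #ι ≤ lift.{v} κ) (hf : ∀ i, #(f i) ≤ κ) :
    #(⋃ i, f i) ≤ κ := by
  rw [← lift_le.{v}]
  calc lift.{v} #(⋃ i, f i) ≤ lift.{u} #ι * ⨆ i, lift.{v} #(f i) := mk_iUnion_le_lift f
    _ ≤ lift.{v} κ * lift.{v} κ := mul_le_mul' hι (ciSup_le' fun i => lift_le.2 (hf i))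
    _ = lift.{v} κ := mul_eq_self (by simpa using hκ)

theorem mk_finset_le_of_le {α : Type u} {κ : Cardinal.{u}} (hκ : ℵ₀ ≤ κ) (hα : #α ≤ κ) :
    #(Finset α) ≤ κ := by
  classical
  exact (mk_le_of_surjective List.toFinset_surjective).trans
    ((mk_list_le_max α).trans (max_le hκ hα))

end Cardinal

variable {X : Type u}

theorem exists_closed_superset_card_le (f : Finset X → Set X)
    (hf : ∀ s, (f s).Finite) {κ : Cardinal.{u}} (hκ : ℵ₀ ≤ κ) {B₀ : Set X} (hB₀ : #B₀ ≤ κ) :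
    ∃ B, B₀ ⊆ B ∧ #B ≤ κ ∧ ∀ s : Finset X, ↑s ⊆ B → f s ⊆ B := by
  classical
  let step (C : Set X) : Set X := C ∪ ⋃ t : Finset C, f (t.map (Function.Embedding.subtype _))
  let C (m : ℕ) : Set X := step^[m] B₀
  have hC_succ (m : ℕ) : C (m + 1) = step (C m) := Function.iterate_succ_apply' step m B₀
  have hC_mono : Monotone C :=
    monotone_nat_of_le_succ fun m => (hC_succ m).symm ▸ subset_union_left
  have hC_card (m : ℕ) : #(C m) ≤ κ := by
    induction m with
    | zero => exact hB₀
    | succ m ih =>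
      rw [hC_succ]
      refine (mk_union_le _ _).trans ((add_le_add ih ?_).trans (add_eq_self hκ).le)
      exact mk_iUnion_le_of_le hκ (by simpa using mk_finset_le_of_le hκ ih)
        fun t => (hf _).lt_aleph0.le.trans hκ
  refine ⟨⋃ m, C m, subset_iUnion C 0, mk_iUnion_le_of_le hκ ?_ hC_card, fun s hs => ?_⟩
  · simpa using hκ
  obtain ⟨m, hm⟩ := hC_mono.directed_le.exists_mem_subset_of_finset_subset_biUnion hs
  have hfs : f s ⊆ step (C m) := by
    rw [← Finset.subtype_map_of_mem (p := (· ∈ C m)) hm]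
    exact subset_union_right.trans' (subset_iUnion_of_subset _ subset_rfl)
  exact hfs.trans ((hC_succ m) ▸ subset_iUnion C (m + 1))

def Finset.IsFree [DecidableEq X] (f : Finset X → Set X) (s : Finset X) : Prop :=
  ∀ a ∈ s, a ∉ f (s.erase a)

/-- Kuratowski's free set theorem. -/
theorem exists_isFree_card_eq_of_aleph_le [DecidableEq X] (k : ℕ) (f : Finset X → Set X)
    (hf : ∀ s, (f s).Finite) (S : Set X) (hS : aleph k ≤ #S) :
    ∃ s : Finset X, ↑s ⊆ S ∧ s.card = k + 1 ∧ s.IsFree f := by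
  induction k generalizing f S with
  | zero =>
    have hS_inf : S.Infinite := infinite_coe_iff.1 (Cardinal.infinite_iff.2 (by simpa using hS))
    obtain ⟨a, haS, ha⟩ := (hS_inf.sdiff (hf ∅)).nonempty
    refine ⟨{a}, by simpa using haS, rfl, fun b hb => ?_⟩
    rw [Finset.mem_singleton.1 hb, Finset.erase_singleton]
    exact ha
  | succ k ih =>
    obtain ⟨B₀, hB₀S, hB₀⟩ := le_mk_iff_exists_subset.1
      ((aleph_le_aleph.2 (by simp)).trans hS : aleph k ≤ #S)
    obtain ⟨B, hB₀B, hB, hB_closed⟩ :=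
      exists_closed_superset_card_le f hf (aleph0_le_aleph k) hB₀.le
    obtain ⟨a₀, ha₀S, ha₀B⟩ : (S \ B).Nonempty := by
      refine sdiff_nonempty.2 fun hSB => ?_
      have := (mk_le_mk_of_subset hSB).trans hB
      exact (aleph_lt_aleph.2 (by simp)).not_ge (hS.trans this)
    obtain ⟨t, htB₀, ht_card, ht_free⟩ :=
      ih (fun t => f (insert a₀ t)) (fun t => hf _) B₀ hB₀.ge
    have htB : ↑t ⊆ B := htB₀.trans hB₀B
    have ha₀t : a₀ ∉ t := fun h => ha₀B (htB h)
    refine ⟨insert a₀ t, ?_, by rw [Finset.card_insert_of_notMem ha₀t, ht_card], ?_⟩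
    · rw [Finset.coe_insert]
      exact insert_subset ha₀S (htB₀.trans hB₀S)
    intro a ha
    rcases Finset.mem_insert.1 ha with rfl | hat
    · rw [Finset.erase_insert ha₀t]
      exact fun h => ha₀B (hB_closed t htB h)
    · rw [Finset.erase_insert_of_ne (ne_of_mem_of_not_mem hat ha₀t).symm]
      exact ht_free a hat

theorem exists_le_covBy_of_lt_of_finite_Iic {α : Type*} [PartialOrder α] {a b : α}
    (hb : (Iic b).Finite) (hab : a < b) : ∃ c, a ≤ c ∧ c ⋖ b := by
  obtain ⟨c, hc⟩ := (hb.subset (show Ico a b ⊆ Iic b from fun x hx => hx.2.le)).exists_maximal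
    ⟨a, left_mem_Ico.2 hab⟩
  exact ⟨c, hc.prop.1, hc.prop.2, fun d hcd hdb =>
    hcd.not_ge (hc.2 ⟨hc.prop.1.trans hcd.le, hdb⟩ hcd.le)⟩

theorem Finset.card_le_ncard_covBy_sup' {α : Type*} [Lattice α] [DecidableEq α] {s : Finset α}
    (hs : s.Nonempty) (hfin : (Set.Iic (s.sup' hs id)).Finite)
    (hfree : s.IsFree fun t => lowerBounds (upperBounds ↑t)) :
    s.card ≤ {c | c ⋖ s.sup' hs id}.ncard := by
  set b := s.sup' hs id
  have hcov (a : α) (ha : a ∈ s) : ∃ c, (∀ x ∈ s.erase a, x ≤ c) ∧ c ⋖ b := by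
    obtain ⟨u, hu, hau⟩ : ∃ u ∈ upperBounds ↑(s.erase a), ¬ a ≤ u := by
      simpa [lowerBounds] using hfree a ha
    have hub : u ⊓ b < b := inf_le_right.lt_of_ne fun h =>
      hau (le_of_le_of_eq (s.le_sup' id ha) h.symm |>.trans inf_le_left)
    obtain ⟨c, huc, hcb⟩ := exists_le_covBy_of_lt_of_finite_Iic hfin hub
    refine ⟨c, fun x hx => (le_inf (hu hx) ?_).trans huc, hcb⟩
    exact s.le_sup' id (Finset.mem_of_mem_erase hx)
  choose! c hc_above hc_cov using hcov
  rw [← Set.ncard_coe_finset]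
  refine ncard_le_ncard_of_injOn c (fun a ha => hc_cov a ha) (fun a ha a' ha' h => ?_)
    (hfin.subset fun y hy => hy.le)
  by_contra hne
  refine (hc_cov a ha).lt.not_ge (Finset.sup'_le hs id fun x hx => ?_)
  by_cases hxa : x = a
  · exact h ▸ hc_above a' ha' x (Finset.mem_erase.2 ⟨hxa ▸ hne, hxa ▸ ha⟩)
  · exact hc_above a ha x (Finset.mem_erase.2 ⟨hxa, hx⟩)

theorem ladder_card_le_general {P : Type u} [Lattice P] (n : ℕ)
    (h : IsNLadder P n) :
    Cardinal.mk P ≤ Cardinal.aleph ((n - 1 : ℕ) : Ordinal) := by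
  classical
  obtain ⟨hne, hfin, hcov⟩ := h
  by_contra! hP
  have hP_aleph : aleph n ≤ #(univ : Set P) := by
    rw [mk_univ]
    rcases n with _ | m
    · simpa using hP.le
    · rw [Nat.cast_succ, ← succ_aleph]
      exact Order.succ_le_of_lt (by simpa using hP)
  have hfinite_below (t : Finset P) : (lowerBounds (upperBounds (t : Set P))).Finite := by
    obtain ⟨u, hu⟩ := t.bddAbove
    exact (hfin u).subset fun x hx => hx hu
  obtain ⟨s, -, hs_card, hs_free⟩ := exists_isFree_card_eq_of_aleph_le _ _ hfinite_below _ hP_aleph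
  have hs : s.Nonempty := Finset.card_pos.1 (by omega)
  have hs_le := s.card_le_ncard_covBy_sup' hs (hfin _) hs_free
  have hcov_le := hcov (s.sup' hs id)
  omega

/-- Ditor: for every positive integer `n`, every `n`-ladder has
cardinality at most `ℵ_{n-1}`. -/
theorem ladder_card_le {P : Type u} [Lattice P] (n : ℕ) (hn : 0 < n)
    (h : IsNLadder P n) :
    Cardinal.mk P ≤ Cardinal.aleph ((n - 1 : ℕ) : Ordinal) :=
  ladder_card_le_general n h
end

section
/- (Ditor) For every integer n > 1, every maximal n-ladder is uncountable. Equivalently, every countable n-ladder (for n > 1) is order-isomorphic to a proper ideal of some n-ladder. -/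
universe u

/-- `P` is a maximal `n`-ladder: an `n`-ladder which is not order-isomorphic to
a proper ideal of any `n`-ladder. -/
def IsMaximalNLadder (P : Type u) [Lattice P] (n : ℕ) : Prop :=
  IsNLadder P n ∧
    ¬ ∃ (Q : Type u) (_ : Lattice Q) (I : Order.Ideal Q),
        IsNLadder Q n ∧ I.IsProper ∧ Nonempty (P ≃o ↥I)

/-!
A countable directed poset `P` has a monotone cofinal sequence `c₀ ≤ c₁ ≤ ⋯`. Putting a new chain
`a₀ < a₁ < ⋯` on top of `P`, with `p ≤ aₖ ↔ p ≤ cₖ`, gives a lattice, lower finite if `P` is, in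
which `P` is a proper ideal; the only lower covers of `aₖ` are `cₖ` and `aₖ₋₁`, so for `n ≥ 2` it is again
an `n`-ladder.
-/

open Set

structure CofinalSeq (P : Type*) [Preorder P] where
  seq : ℕ → P
  mono : Monotone seq
  exists_le_seq : ∀ p, ∃ k, p ≤ seq k

namespace CofinalSeq

theorem nonempty_of_countable (P : Type*) [Preorder P] [IsDirectedOrder P] [Nonempty P]
    [Countable P] : Nonempty (CofinalSeq P) :=
  let ⟨c, hc, hlim⟩ := Filter.exists_seq_monotone_tendsto_atTop_atTop P
  ⟨⟨c, hc, fun p => (Filter.tendsto_atTop_atTop.1 hlim p).imp fun _ hk => hk _ le_rfl⟩⟩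

section Preorder

variable {P : Type*} [Preorder P] (s : CofinalSeq P)

noncomputable def level (p : P) : ℕ := sInf {k | p ≤ s.seq k}

theorem level_le_iff {p : P} {k : ℕ} : s.level p ≤ k ↔ p ≤ s.seq k :=
  ⟨fun h => le_trans (Nat.sInf_mem (s.exists_le_seq p)) (s.mono h), fun h => Nat.sInf_le h⟩

theorem gc_level_seq : GaloisConnection s.level s.seq := fun _ _ => s.level_le_iff

end Preorder

@[simp] theorem level_sup {P : Type*} [SemilatticeSup P] (s : CofinalSeq P) (p q : P) :
    s.level (p ⊔ q) = max (s.level p) (s.level q) :=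
  s.gc_level_seq.l_sup

@[simp] theorem level_inf_seq_le {P : Type*} [SemilatticeInf P] (s : CofinalSeq P) (p : P)
    (k : ℕ) : s.level (p ⊓ s.seq k) ≤ k :=
  s.level_le_iff.2 inf_le_right

end CofinalSeq

/-- `P ⊕ ℕ`, ordered by pulling back the product order of `P × ℕ` along `inl p ↦ (p, 0)`,
`inr k ↦ (s.seq k, k + 1)`. -/
def ChainExt {P : Type*} [Preorder P] (_ : CofinalSeq P) : Type _ := P ⊕ ℕ

namespace ChainExt

section PartialOrder

variable {P : Type*} [PartialOrder P] {s : CofinalSeq P}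

def toProd (s : CofinalSeq P) : ChainExt s → P × ℕ :=
  Sum.elim (fun p => (p, 0)) (fun k => (s.seq k, k + 1))

theorem toProd_injective : Function.Injective (toProd s) :=
  Function.Injective.sumElim (fun _ _ h => (Prod.mk.inj h).1)
    (fun _ _ h => Nat.succ_injective (Prod.mk.inj h).2) fun _ _ h => by cases (Prod.mk.inj h).2

instance : PartialOrder (ChainExt s) := PartialOrder.lift _ toProd_injective

def inl (s : CofinalSeq P) : P ↪o ChainExt s :=
  OrderEmbedding.ofMapLEIff Sum.inl fun p q => by
    change (p, 0) ≤ (q, 0) ↔ _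
    simp [Prod.mk_le_mk]

def inr (s : CofinalSeq P) : ℕ ↪o ChainExt s :=
  OrderEmbedding.ofMapLEIff Sum.inr fun k l => by
    change (s.seq k, k + 1) ≤ (s.seq l, l + 1) ↔ _
    simpa [Prod.mk_le_mk] using fun h => s.mono h

@[elab_as_elim, induction_eliminator]
theorem induction {motive : ChainExt s → Prop} (inl : ∀ p, motive (inl s p))
    (inr : ∀ k, motive (inr s k)) : ∀ x, motive x
  | Sum.inl p => inl p
  | Sum.inr k => inr k

@[simp] theorem inl_le_inr {p : P} {k : ℕ} : inl s p ≤ inr s k ↔ p ≤ s.seq k := by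
  change (p, 0) ≤ (s.seq k, k + 1) ↔ _
  simp [Prod.mk_le_mk]

@[simp] theorem not_inr_le_inl (k : ℕ) (p : P) : ¬ inr s k ≤ inl s p := by
  change ¬ (s.seq k, k + 1) ≤ (p, 0)
  simp [Prod.mk_le_mk]

theorem inl_lt_inr {p : P} {k : ℕ} : inl s p < inr s k ↔ p ≤ s.seq k := by
  rw [lt_iff_le_not_ge, inl_le_inr]
  exact and_iff_left (not_inr_le_inl k p)

theorem isLowerSet_range_inl : IsLowerSet (range (inl s)) := by
  rintro x y hyx ⟨p, rfl⟩
  induction y with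
  | inl q => exact mem_range_self q
  | inr k => exact absurd hyx (not_inr_le_inl k p)

theorem finite_Iic (hP : ∀ p : P, (Iic p).Finite) (x : ChainExt s) : (Iic x).Finite := by
  have hIic : Iic x = toProd s ⁻¹' (Iic (toProd s x).1 ×ˢ Iic (toProd s x).2) := by
    rw [Iic_prod_Iic]
    rfl
  rw [hIic]
  exact ((hP _).prod (Set.finite_Iic _)).preimage toProd_injective.injOn

theorem lowerCovers_inl (p : P) : {y | y ⋖ inl s p} = inl s '' {q | q ⋖ p} := by
  have hconn := (isLowerSet_range_inl (s := s)).ordConnected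
  ext y
  constructor
  · intro hy
    obtain ⟨q, rfl⟩ := isLowerSet_range_inl hy.le (mem_range_self p)
    exact ⟨q, (hconn.apply_covBy_apply_iff (inl s)).1 hy, rfl⟩
  · rintro ⟨q, hq, rfl⟩
    exact (hconn.apply_covBy_apply_iff (inl s)).2 hq

theorem lowerCovers_inr_subset (k : ℕ) :
    {y | y ⋖ inr s k} ⊆ {inl s (s.seq k), inr s (k - 1)} := by
  intro y hy
  induction y with
  | inl p =>
    have hlt : inl s (s.seq k) < inr s k := inl_lt_inr.2 le_rfl
    rcases hy.wcovBy.eq_or_eq ((inl s).le_iff_le.2 (inl_le_inr.1 hy.le)) hlt.le with h | h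
    · exact Or.inl h.symm
    · exact absurd h hlt.ne
  | inr j =>
    have hjk : j < k := (inr s).lt_iff_lt.1 hy.lt
    rcases hy.wcovBy.eq_or_eq ((inr s).le_iff_le.2 j.le_succ) ((inr s).le_iff_le.2 hjk) with h | h
    · exact absurd ((inr s).injective h) j.succ_ne_self
    · right
      rw [mem_singleton_iff, ← (inr s).injective h]
      rfl

theorem ncard_lowerCovers_inr_le_two (k : ℕ) : {y | y ⋖ inr s k}.ncard ≤ 2 :=
  calc {y | y ⋖ inr s k}.ncard
      ≤ ({inl s (s.seq k), inr s (k - 1)} : Set (ChainExt s)).ncard :=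
        ncard_le_ncard (lowerCovers_inr_subset k) (toFinite _)
    _ ≤ 2 := (ncard_insert_le _ _).trans (by simp)

theorem isIdeal_range_inl [IsDirectedOrder P] : Order.IsIdeal (range (inl s)) :=
  ⟨isLowerSet_range_inl, ⟨_, mem_range_self (s.seq 0)⟩,
    directedOn_range.2 (inl s).monotone.directed_le⟩

def rangeIdeal [IsDirectedOrder P] (s : CofinalSeq P) : Order.Ideal (ChainExt s) :=
  isIdeal_range_inl.toIdeal

theorem rangeIdeal_isProper [IsDirectedOrder P] : (rangeIdeal s).IsProper :=
  Order.Ideal.isProper_of_notMem (p := inr s 0) fun ⟨p, hp⟩ => not_inr_le_inl 0 p hp.ge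

noncomputable def orderIsoRangeIdeal [IsDirectedOrder P] : P ≃o rangeIdeal s :=
  (inl s).orderIso

end PartialOrder

section Lattice

variable {P : Type*} [Lattice P] {s : CofinalSeq P}

noncomputable instance : Max (ChainExt s) where
  max
    | Sum.inl p, Sum.inl q => inl s (p ⊔ q)
    | Sum.inl p, Sum.inr k => inr s (max (s.level p) k)
    | Sum.inr k, Sum.inl q => inr s (max k (s.level q))
    | Sum.inr k, Sum.inr l => inr s (max k l)

instance : Min (ChainExt s) where
  min
    | Sum.inl p, Sum.inl q => inl s (p ⊓ q)
    | Sum.inl p, Sum.inr k => inl s (p ⊓ s.seq k)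
    | Sum.inr k, Sum.inl q => inl s (q ⊓ s.seq k)
    | Sum.inr k, Sum.inr l => inr s (min k l)

section
variable (p q : P) (k l : ℕ)
@[simp] theorem inl_sup_inl : inl s p ⊔ inl s q = inl s (p ⊔ q) := rfl
@[simp] theorem inl_sup_inr : inl s p ⊔ inr s k = inr s (max (s.level p) k) := rfl
@[simp] theorem inr_sup_inl : inr s k ⊔ inl s q = inr s (max k (s.level q)) := rfl
@[simp] theorem inr_sup_inr : inr s k ⊔ inr s l = inr s (max k l) := rfl
@[simp] theorem inl_inf_inl : inl s p ⊓ inl s q = inl s (p ⊓ q) := rfl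
@[simp] theorem inl_inf_inr : inl s p ⊓ inr s k = inl s (p ⊓ s.seq k) := rfl
@[simp] theorem inr_inf_inl : inr s k ⊓ inl s q = inl s (q ⊓ s.seq k) := rfl
@[simp] theorem inr_inf_inr : inr s k ⊓ inr s l = inr s (min k l) := rfl
end

noncomputable instance : Lattice (ChainExt s) where
  sup := max
  inf := min
  le_sup_left x y := by induction x <;> induction y <;> simp [← s.level_le_iff]
  le_sup_right x y := by induction x <;> induction y <;> simp [← s.level_le_iff]
  sup_le x y z := by
    induction x <;> induction y <;> induction z <;> simp +contextual [← s.level_le_iff]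
  inf_le_left x y := by induction x <;> induction y <;> simp [← s.level_le_iff]
  inf_le_right x y := by induction x <;> induction y <;> simp [← s.level_le_iff]
  le_inf x y z := by
    induction x <;> induction y <;> induction z <;> simp +contextual [← s.level_le_iff]

theorem isNLadder {n : ℕ} (hP : IsNLadder P n) (hn : 2 ≤ n) : IsNLadder (ChainExt s) n := by
  refine ⟨⟨inr s 0⟩, finite_Iic hP.2.1, fun x => ?_⟩
  induction x with
  | inl p =>
    rw [lowerCovers_inl, ncard_image_of_injective _ (inl s).injective]
    exact hP.2.2 p
  | inr k => exact (ncard_lowerCovers_inr_le_two k).trans hn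

end Lattice

end ChainExt

/-- Ditor: for every `n > 1`, every maximal `n`-ladder is
uncountable. -/
theorem maximal_ladder_uncountable {P : Type u} [Lattice P] (n : ℕ) (hn : 1 < n)
    (h : IsMaximalNLadder P n) : Uncountable P := by
  by_contra hP
  have : Countable P := not_uncountable_iff.1 hP
  have : Nonempty P := h.1.1
  obtain ⟨s⟩ := CofinalSeq.nonempty_of_countable P
  exact h.2 ⟨ChainExt s, inferInstance, ChainExt.rangeIdeal s, ChainExt.isNLadder h.1 hn,
    ChainExt.rangeIdeal_isProper, ⟨ChainExt.orderIsoRangeIdeal⟩⟩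
end

section
/- Let ρ be a map as above. Then (K, ⊴_ρ) is a join-semilattice (i.e., ⊴_ρ is a partial order in which every two elements have a least upper bound) if and only if ρ satisfies: for all α < β < γ < ω1 and all n ∈ ω, (ρ1) ρ(α,β) is non-decreasing; (ρ2) ρ(α,γ)(n) ≤ max{ρ(α,β)(n), ρ(β,γ)(n)}; (ρ3) ρ(α,β)(n) ≤ max{ρ(α,γ)(n), ρ(β,γ)(n)}; (ρ4) ρ(β,γ)(n) ≤ max{ρ(α,γ)(n), ρ(β,γ)(0)}. -/
/-! The order axioms and the existence of joins for `⊴_ρ` translate, clause by clause, into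
(ρ1)–(ρ4). Transitivity through `(β, n, ρ(α,β)(n))` gives (ρ1) and (ρ2). For `α ≤ β` and
`n' ≤ n`, the point `(β, n, ρ(α,β)(n))` is an upper bound of `(α,n,0)` and `(β,n',0)`, which
forces their join to be `(β, n, l)` with `ρ(α,β)(n) ≤ l`; testing this join against the upper
bounds in a column `γ > β` gives (ρ3) (for `n' = n`) and (ρ4) (for `n' = 0`). Conversely,
(ρ3) and (ρ4) show that for `α ≤ β` the join of `(α,n,m)` and `(β,n',m')` is
`(β, max n n', max (max m m') ρ(α,β)(n))`. -/

/-- The first uncountable ordinal `ω₁`, as the type of ordinals `< ω₁`. -/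
abbrev Omega1 : Type 1 := {o : Ordinal // o < (Cardinal.aleph 1).ord}

/-- The underlying set `K = {0} ∪ (ω₁ × ω × ω)`; `none` plays the role of `0`. -/
abbrev KType : Type 1 := Option (Omega1 × ℕ × ℕ)

/-- The relation `⊴_ρ` on `K` induced by `ρ`: `0 ⊴ x` for all `x`, and
`(α,n,m) ⊴ (β,n',m')` iff `α ≤ β`, `n ≤ n'`, `m ≤ m'` and `ρ α β n ≤ m'`. -/
def KRel (ρ : Omega1 → Omega1 → ℕ → ℕ) : KType → KType → Prop
  | none, _ => True
  | some _, none => False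
  | some (α, n, m), some (β, n', m') => α ≤ β ∧ n ≤ n' ∧ m ≤ m' ∧ ρ α β n ≤ m'

instance : NoMaxOrder Omega1 :=
  (Cardinal.isSuccLimit_ord (Cardinal.aleph0_le_aleph 1)).isSuccPrelimit.noMaxOrder_Iio

section RhoConditions

variable {ι : Type*} [LinearOrder ι] {ρ : ι → ι → ℕ → ℕ}

def RhoConditions (ρ : ι → ι → ℕ → ℕ) : Prop :=
  ∀ α β γ : ι, α < β → β < γ → ∀ n : ℕ,
    Monotone (ρ α β) ∧
    ρ α γ n ≤ max (ρ α β n) (ρ β γ n) ∧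
    ρ α β n ≤ max (ρ α γ n) (ρ β γ n) ∧
    ρ β γ n ≤ max (ρ α γ n) (ρ β γ 0)

namespace RhoConditions

variable {α β γ : ι}

theorem monotone [NoMaxOrder ι] (h : RhoConditions ρ) (hdiag : ∀ α n, ρ α α n = 0)
    (hab : α ≤ β) : Monotone (ρ α β) := by
  rcases hab.eq_or_lt with rfl | hab
  · simp [Monotone, hdiag]
  · obtain ⟨γ, hbc⟩ := exists_gt β
    exact (h α β γ hab hbc 0).1

theorem apply_outer_le_max (h : RhoConditions ρ) (hab : α ≤ β) (hbc : β ≤ γ) (n : ℕ) :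
    ρ α γ n ≤ max (ρ α β n) (ρ β γ n) := by
  rcases hab.eq_or_lt with rfl | hab
  · exact le_max_right _ _
  rcases hbc.eq_or_lt with rfl | hbc
  · exact le_max_left _ _
  exact (h α β γ hab hbc n).2.1

theorem apply_left_le_max (h : RhoConditions ρ) (hdiag : ∀ α n, ρ α α n = 0) (hab : α ≤ β)
    (hbc : β ≤ γ) (n : ℕ) :
    ρ α β n ≤ max (ρ α γ n) (ρ β γ n) := by
  rcases hab.eq_or_lt with rfl | hab
  · simp [hdiag]
  rcases hbc.eq_or_lt with rfl | hbc
  · exact le_max_left _ _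
  exact (h α β γ hab hbc n).2.2.1

theorem apply_right_le_max (h : RhoConditions ρ) (hdiag : ∀ α n, ρ α α n = 0) (hab : α ≤ β)
    (hbc : β ≤ γ) (n : ℕ) :
    ρ β γ n ≤ max (ρ α γ n) (ρ β γ 0) := by
  rcases hab.eq_or_lt with rfl | hab
  · exact le_max_left _ _
  rcases hbc.eq_or_lt with rfl | hbc
  · simp [hdiag]
  exact (h α β γ hab hbc n).2.2.2

end RhoConditions

end RhoConditions

namespace KRel

variable {ρ : Omega1 → Omega1 → ℕ → ℕ}

@[simp] theorem none_left {x : KType} : KRel ρ none x := trivial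

@[simp] theorem some_some {α β : Omega1} {n m n' m' : ℕ} :
    KRel ρ (some (α, n, m)) (some (β, n', m')) ↔ α ≤ β ∧ n ≤ n' ∧ m ≤ m' ∧ ρ α β n ≤ m' :=
  Iff.rfl

def IsJoin (ρ : Omega1 → Omega1 → ℕ → ℕ) (x y z : KType) : Prop :=
  KRel ρ x z ∧ KRel ρ y z ∧ ∀ w, KRel ρ x w → KRel ρ y w → KRel ρ z w

theorem IsJoin.symm {x y z : KType} (h : IsJoin ρ x y z) : IsJoin ρ y x z :=
  ⟨h.2.1, h.1, fun w hx hy => h.2.2 w hy hx⟩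

theorem refl (hdiag : ∀ α n, ρ α α n = 0) (x : KType) : KRel ρ x x := by
  rcases x with _ | ⟨α, n, m⟩ <;> simp [hdiag]

theorem antisymm {x y : KType} (hxy : KRel ρ x y) (hyx : KRel ρ y x) : x = y := by
  rcases x with _ | ⟨α, n, m⟩ <;> rcases y with _ | ⟨β, n', m'⟩
  · rfl
  · exact hyx.elim
  · exact hxy.elim
  obtain ⟨hab, hn, hm, -⟩ := hxy
  obtain ⟨hba, hn', hm', -⟩ := hyx
  rw [le_antisymm hab hba, le_antisymm hn hn', le_antisymm hm hm']

theorem trans (h : RhoConditions ρ) (hdiag : ∀ α n, ρ α α n = 0) {x y z : KType}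
    (hxy : KRel ρ x y) (hyz : KRel ρ y z) : KRel ρ x z := by
  rcases x with _ | ⟨α, n, m⟩
  · trivial
  rcases y with _ | ⟨β, n', m'⟩
  · exact hxy.elim
  rcases z with _ | ⟨γ, n'', m''⟩
  · exact hyz.elim
  obtain ⟨hab, hn, hm, hρ⟩ := hxy
  obtain ⟨hbc, hn', hm', hρ'⟩ := hyz
  refine ⟨hab.trans hbc, hn.trans hn', hm.trans hm', ?_⟩
  calc ρ α γ n ≤ max (ρ α β n) (ρ β γ n) := h.apply_outer_le_max hab hbc n
    _ ≤ m'' := max_le (hρ.trans hm') ((h.monotone hdiag hbc hn).trans hρ')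

theorem isPartialOrder (h : RhoConditions ρ) (hdiag : ∀ α n, ρ α α n = 0) :
    IsPartialOrder KType (KRel ρ) where
  refl := refl hdiag
  trans _ _ _ := trans h hdiag
  antisymm _ _ := antisymm

theorem isJoin_some_of_le (h : RhoConditions ρ) (hdiag : ∀ α n, ρ α α n = 0) {α β : Omega1}
    (hab : α ≤ β) (n m n' m' : ℕ) :
    IsJoin ρ (some (α, n, m)) (some (β, n', m'))
      (some (β, max n n', max (max m m') (ρ α β n))) := by
  refine ⟨⟨hab, le_max_left _ _, (le_max_left m m').trans (le_max_left _ _), le_max_right _ _⟩,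
    ⟨le_rfl, le_max_right _ _, (le_max_right m m').trans (le_max_left _ _), by simp [hdiag]⟩,
    ?_⟩
  rintro (_ | ⟨δ, k, l⟩) hxw hyw
  · exact hxw.elim
  obtain ⟨had, hnk, hml, hρad⟩ := hxw
  obtain ⟨hbd, hn'k, hm'l, hρbd⟩ := hyw
  have hρbd_n : ρ β δ n ≤ l :=
    calc ρ β δ n ≤ max (ρ α δ n) (ρ β δ 0) := h.apply_right_le_max hdiag hab hbd n
      _ ≤ l := max_le hρad ((h.monotone hdiag hbd (Nat.zero_le n')).trans hρbd)
  have hρab : ρ α β n ≤ l := (h.apply_left_le_max hdiag hab hbd n).trans (max_le hρad hρbd_n)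
  refine ⟨hbd, max_le hnk hn'k, max_le (max_le hml hm'l) hρab, ?_⟩
  rw [(h.monotone hdiag hbd).map_max]
  exact max_le hρbd_n hρbd

theorem exists_isJoin (h : RhoConditions ρ) (hdiag : ∀ α n, ρ α α n = 0) (x y : KType) :
    ∃ z, IsJoin ρ x y z := by
  rcases x with _ | ⟨α, n, m⟩
  · exact ⟨y, none_left, refl hdiag y, fun _ _ hy => hy⟩
  rcases y with _ | ⟨β, n', m'⟩
  · exact ⟨_, refl hdiag _, none_left, fun _ hx _ => hx⟩
  rcases le_total α β with hab | hba
  · exact ⟨_, isJoin_some_of_le h hdiag hab n m n' m'⟩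
  · exact ⟨_, (isJoin_some_of_le h hdiag hba n' m' n m).symm⟩

variable {α β γ : Omega1}

theorem monotone_of_isTrans [IsTrans KType (KRel ρ)] (hdiag : ∀ α n, ρ α α n = 0)
    (hab : α ≤ β) : Monotone (ρ α β) := fun k k' hk =>
  (trans_of (KRel ρ) (show KRel ρ (some (α, k, 0)) (some (α, k', 0)) by simp [hdiag, hk])
    (show KRel ρ (some (α, k', 0)) (some (β, k', ρ α β k')) by simp [hab])).2.2.2

theorem apply_outer_le_max_of_isTrans [IsTrans KType (KRel ρ)] (hab : α ≤ β) (hbc : β ≤ γ)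
    (n : ℕ) : ρ α γ n ≤ max (ρ α β n) (ρ β γ n) :=
  (trans_of (KRel ρ) (show KRel ρ (some (α, n, 0)) (some (β, n, ρ α β n)) by simp [hab])
    (show KRel ρ _ (some (γ, n, max (ρ α β n) (ρ β γ n))) by simp [hbc])).2.2.2

theorem IsJoin.eq_some (hdiag : ∀ α n, ρ α α n = 0) (hab : α ≤ β) {n n' : ℕ} (hn : n' ≤ n)
    {z : KType} (hz : IsJoin ρ (some (α, n, 0)) (some (β, n', 0)) z) :
    ∃ l, ρ α β n ≤ l ∧ z = some (β, n, l) := by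
  obtain ⟨hxz, hyz, hleast⟩ := hz
  rcases z with _ | ⟨δ, k, l⟩
  · exact hxz.elim
  have hw := hleast (some (β, n, ρ α β n)) (by simp [hab]) (by simp [hdiag, hn])
  obtain rfl : δ = β := le_antisymm hw.1 hyz.1
  obtain rfl : k = n := le_antisymm hw.2.1 hxz.2.1
  exact ⟨l, hxz.2.2.2, rfl⟩

theorem apply_left_le_max_of_isJoin (hdiag : ∀ α n, ρ α α n = 0) (hab : α ≤ β) (hbc : β ≤ γ)
    {n : ℕ} {z : KType} (hz : IsJoin ρ (some (α, n, 0)) (some (β, n, 0)) z) :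
    ρ α β n ≤ max (ρ α γ n) (ρ β γ n) := by
  obtain ⟨l, hl, rfl⟩ := hz.eq_some hdiag hab le_rfl
  exact hl.trans (hz.2.2 (some (γ, n, max (ρ α γ n) (ρ β γ n)))
    (by simp [hab.trans hbc]) (by simp [hbc])).2.2.1

theorem apply_right_le_max_of_isJoin (hdiag : ∀ α n, ρ α α n = 0) (hab : α ≤ β) (hbc : β ≤ γ)
    {n : ℕ} {z : KType} (hz : IsJoin ρ (some (α, n, 0)) (some (β, 0, 0)) z) :
    ρ β γ n ≤ max (ρ α γ n) (ρ β γ 0) := by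
  obtain ⟨l, -, rfl⟩ := hz.eq_some hdiag hab (Nat.zero_le n)
  exact (hz.2.2 (some (γ, n, max (ρ α γ n) (ρ β γ 0)))
    (by simp [hab.trans hbc]) (by simp [hbc])).2.2.2

end KRel

/-- `(K, ⊴_ρ)` is a join-semilattice (a partial order in which
every two elements have a least upper bound) iff `ρ` satisfies (ρ1)–(ρ4). -/
theorem K_joinSemilattice_iff (ρ : Omega1 → Omega1 → ℕ → ℕ)
    (hdiag : ∀ α : Omega1, ∀ n : ℕ, ρ α α n = 0) :
    (IsPartialOrder KType (KRel ρ) ∧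
      ∀ x y : KType, ∃ z, KRel ρ x z ∧ KRel ρ y z ∧
        ∀ w, KRel ρ x w → KRel ρ y w → KRel ρ z w) ↔
    (∀ α β γ : Omega1, α < β → β < γ → ∀ n : ℕ,
      Monotone (ρ α β) ∧
      ρ α γ n ≤ max (ρ α β n) (ρ β γ n) ∧
      ρ α β n ≤ max (ρ α γ n) (ρ β γ n) ∧
      ρ β γ n ≤ max (ρ α γ n) (ρ β γ 0)) := by
  constructor
  · rintro ⟨hpo, hjoin⟩ α β γ hab hbc n
    obtain ⟨z, hz⟩ := hjoin (some (α, n, 0)) (some (β, n, 0))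
    obtain ⟨z', hz'⟩ := hjoin (some (α, n, 0)) (some (β, 0, 0))
    exact ⟨KRel.monotone_of_isTrans hdiag hab.le,
      KRel.apply_outer_le_max_of_isTrans hab.le hbc.le n,
      KRel.apply_left_le_max_of_isJoin hdiag hab.le hbc.le hz,
      KRel.apply_right_le_max_of_isJoin hdiag hab.le hbc.le hz'⟩
  · intro h
    exact ⟨KRel.isPartialOrder h hdiag, KRel.exists_isJoin h hdiag⟩
end

section
/- Let ρ be a map as above such that (K, ⊴_ρ) is a join-semilattice. Then (K, ⊴_ρ) is lower finite (i.e., for every x ∈ K the set {y ∈ K : y ⊴_ρ x} is finite) if and only if for every α < ω1 and every n ∈ ω the set {ν < α : ρ(ν,α)(0) ≤ n} is finite. -/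
/-- if `(K, ⊴_ρ)` is a join-semilattice, then it is lower finite
iff for every `α < ω₁` and `n ∈ ω` the set `{ν < α : ρ ν α 0 ≤ n}` is finite. -/
theorem K_lowerFinite_iff (ρ : Omega1 → Omega1 → ℕ → ℕ)
    (hdiag : ∀ α : Omega1, ∀ n : ℕ, ρ α α n = 0)
    (hjoin : IsPartialOrder KType (KRel ρ) ∧
      ∀ x y : KType, ∃ z, KRel ρ x z ∧ KRel ρ y z ∧
        ∀ w, KRel ρ x w → KRel ρ y w → KRel ρ z w) :
    (∀ x : KType, {y : KType | KRel ρ y x}.Finite) ↔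
      ∀ (α : Omega1) (n : ℕ), {ν : Omega1 | ν < α ∧ ρ ν α 0 ≤ n}.Finite := by
  obtain ⟨hpo, -⟩ := hjoin
  constructor
  · intro h α n
    have hfin := h (some (α, 0, n))
    have himg : (fun ν : Omega1 => (some (ν, 0, n) : KType)) ''
        {ν | ν < α ∧ ρ ν α 0 ≤ n} ⊆ {y | KRel ρ y (some (α, 0, n))} := by
      rintro _ ⟨ν, ⟨hν, hρ⟩, rfl⟩
      exact ⟨hν.le, le_refl 0, le_refl n, hρ⟩
    exact Set.Finite.of_finite_image (hfin.subset himg)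
      (fun a _ b _ hab => by simpa using hab)
  · intro h x
    match x with
    | none =>
      apply Set.Finite.subset (Set.finite_singleton (none : KType))
      rintro (_|y) hy
      · exact rfl
      · exact absurd hy id
    | some (β, n', m') =>
      have hA : (insert β {ν : Omega1 | ν < β ∧ ρ ν β 0 ≤ m'}).Finite := (h β m').insert β
      have hfin : ((insert β {ν : Omega1 | ν < β ∧ ρ ν β 0 ≤ m'}) ×ˢ
          (Set.Iic n') ×ˢ (Set.Iic m')).Finite :=
        hA.prod ((Set.finite_Iic n').prod (Set.finite_Iic m'))
      apply Set.Finite.subset ((hfin.image some).insert none)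
      rintro (_|⟨α, n, m⟩) hy
      · exact Set.mem_insert _ _
      · obtain ⟨hαβ, hn, hm, hρ⟩ := hy
        refine Set.mem_insert_of_mem _ ⟨(α, n, m), ⟨?_, hn, hm⟩, rfl⟩
        rcases hαβ.lt_or_eq with hlt | heq
        · refine Set.mem_insert_of_mem _ ⟨hlt, ?_⟩
          have h1 : KRel ρ (some (α, 0, 0)) (some (α, n, m)) :=
            ⟨le_refl _, Nat.zero_le _, Nat.zero_le _, by simp [hdiag]⟩
          have h2 : KRel ρ (some (α, 0, 0)) (some (β, n', m')) :=
            hpo.toIsPreorder.toIsTrans.trans _ _ _ h1 ⟨hαβ, hn, hm, hρ⟩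
          exact h2.2.2.2
        · subst heq; exact Set.mem_insert _ _
end

section
/- Let ρ be a map as above. If (K, ⊴_ρ) is a lower finite join-semilattice, then it is a 3-ladder: it is a lower finite lattice in which every element has at most 3 lower covers. -/
/-- The strict version of a relation. -/
def RelLt {X : Type*} (r : X → X → Prop) (x y : X) : Prop := r x y ∧ x ≠ y

/-- `z` is a lower cover of `x` with respect to the relation `r`. -/
def RelCovBy {X : Type*} (r : X → X → Prop) (z x : X) : Prop :=
  RelLt r z x ∧ ∀ y, ¬ (RelLt r z y ∧ RelLt r y x)

/-- `(X, r)` is an `n`-ladder: `r` is a partial order in which every pair of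
elements has a least upper bound and a greatest lower bound (a lattice), which
is lower finite, and in which every element has at most `n` lower covers. -/
def RelIsNLadder {X : Type*} (r : X → X → Prop) (n : ℕ) : Prop :=
  IsPartialOrder X r ∧
  (∀ x y : X, ∃ z, r x z ∧ r y z ∧ ∀ w, r x w → r y w → r z w) ∧
  (∀ x y : X, ∃ z, r z x ∧ r z y ∧ ∀ w, r w x → r w y → r w z) ∧
  (∀ x : X, {y : X | r y x}.Finite) ∧
  (∀ x : X, {z : X | RelCovBy r z x}.ncard ≤ n)

/-!
Meets come for free: in a lower finite join-semilattice with least element `0`, the meet of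
`x` and `y` is the join of their finitely many common lower bounds.

For covers, call `α` the level of `(α, n, m)`. Since `ρ(β, β) = 0`, a lower cover of
`x = (β, n', m')` of the same level is `(β, n', m' - 1)` or `(β, n' - 1, m')`. The elements of
level `< β`, together with `0`, form a directed set, so the join of two lower covers of level
`< β` again has level `< β`, hence lies strictly below `x` and equals both of them. This leaves
at most `2 + 1` lower covers.
-/

section RelLattice

variable {X : Type*} {r : X → X → Prop}

theorem RelCovBy.eq_of_rel_of_relLt {z c x : X} (hz : RelCovBy r z x) (hzc : r z c)
    (hcx : RelLt r c x) : z = c := by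
  by_contra hne
  exact hz.2 c ⟨⟨hzc, hne⟩, hcx⟩

theorem exists_finset_join [IsTrans X r] {b : X} (hbot : ∀ x, r b x)
    (hjoin : ∀ x y : X, ∃ z, r x z ∧ r y z ∧ ∀ w, r x w → r y w → r z w) (s : Finset X) :
    ∃ z, (∀ w ∈ s, r w z) ∧ ∀ u, (∀ w ∈ s, r w u) → r z u := by
  classical
  induction s using Finset.induction_on with
  | empty => exact ⟨b, by simp, fun u _ => hbot u⟩
  | insert a s _ ih =>
    obtain ⟨z, hsz, hz⟩ := ih
    obtain ⟨j, haj, hzj, hj⟩ := hjoin a z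
    refine ⟨j, ?_, fun u hu => hj u (hu a (s.mem_insert_self a))
      (hz u fun w hw => hu w (Finset.mem_insert_of_mem hw))⟩
    intro w hw
    rcases Finset.mem_insert.mp hw with rfl | hw
    · exact haj
    · exact _root_.trans (hsz w hw) hzj

theorem exists_meet_of_lower_finite [IsTrans X r] {b : X} (hbot : ∀ x, r b x)
    (hjoin : ∀ x y : X, ∃ z, r x z ∧ r y z ∧ ∀ w, r x w → r y w → r z w)
    (hLF : ∀ x : X, {y : X | r y x}.Finite) (x y : X) :
    ∃ z, r z x ∧ r z y ∧ ∀ w, r w x → r w y → r w z := by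
  have hfin : {w | r w x ∧ r w y}.Finite := (hLF x).subset fun _ hw => hw.1
  obtain ⟨z, hub, hlub⟩ := exists_finset_join hbot hjoin hfin.toFinset
  simp only [Set.Finite.mem_toFinset, Set.mem_ofPred_eq] at hub hlub
  exact ⟨z, hlub x fun _ hw => hw.1, hlub y fun _ hw => hw.2, fun w hx hy => hub w ⟨hx, hy⟩⟩

end RelLattice

section KRel

variable {ρ : Omega1 → Omega1 → ℕ → ℕ}

@[simp]
theorem krel_none_left (x : KType) : KRel ρ none x := trivial

@[simp]
theorem not_krel_some_none (p : Omega1 × ℕ × ℕ) : ¬ KRel ρ (some p) none := id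

@[simp]
theorem krel_some_some {α β : Omega1} {n m n' m' : ℕ} :
    KRel ρ (some (α, n, m)) (some (β, n', m')) ↔ α ≤ β ∧ n ≤ n' ∧ m ≤ m' ∧ ρ α β n ≤ m' :=
  Iff.rfl

theorem levelLt_of_krel {β : Omega1} {y u : KType} (hyu : KRel ρ y u)
    (hu : ∀ p ∈ u, p.1 < β) : ∀ p ∈ y, p.1 < β := by
  rintro ⟨α, n, m⟩ rfl
  obtain _ | ⟨γ, n', m'⟩ := u
  · exact absurd hyu (not_krel_some_none _)
  · exact lt_of_le_of_lt (krel_some_some.mp hyu).1 (hu _ rfl)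

theorem krel_refl (hdiag : ∀ α n, ρ α α n = 0) : ∀ x : KType, KRel ρ x x
  | none => trivial
  | some (α, n, m) => by simp [hdiag]

theorem directedOn_levelLt (hdiag : ∀ α n, ρ α α n = 0) (β : Omega1) :
    DirectedOn (KRel ρ) {y : KType | ∀ p ∈ y, p.1 < β} := by
  rintro (_ | ⟨α₁, n₁, m₁⟩) h₁ (_ | ⟨α₂, n₂, m₂⟩) h₂
  · exact ⟨none, h₁, trivial, trivial⟩
  · exact ⟨_, h₂, trivial, krel_refl hdiag _⟩
  · exact ⟨_, h₁, krel_refl hdiag _, trivial⟩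
  replace h₁ : α₁ < β := h₁ _ rfl
  replace h₂ : α₂ < β := h₂ _ rfl
  set γ := α₁ ⊔ α₂
  refine ⟨some (γ, n₁ ⊔ n₂, m₁ ⊔ m₂ ⊔ ρ α₁ γ n₁ ⊔ ρ α₂ γ n₂), ?_, ?_, ?_⟩
  · rintro _ ⟨⟩
    exact sup_lt_iff.2 ⟨h₁, h₂⟩
  · simp only [krel_some_some]
    refine ⟨le_sup_left, le_sup_left, ?_, ?_⟩ <;> simp
  · simp only [krel_some_some]
    refine ⟨le_sup_right, le_sup_right, ?_, ?_⟩ <;> simp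

theorem not_relLt_none (z : KType) : ¬ RelLt (KRel ρ) z none := by
  rintro ⟨hz, hne⟩
  cases z
  · exact hne rfl
  · exact not_krel_some_none _ hz

theorem subsingleton_relCovBy_levelLt (hdiag : ∀ α n, ρ α α n = 0)
    (hjoin : ∀ x y : KType, ∃ z, KRel ρ x z ∧ KRel ρ y z ∧
      ∀ w, KRel ρ x w → KRel ρ y w → KRel ρ z w) (β : Omega1) (n' m' : ℕ) :
    {z : KType | RelCovBy (KRel ρ) z (some (β, n', m')) ∧ ∀ p ∈ z, p.1 < β}.Subsingleton := by
  rintro z₁ ⟨hc₁, hl₁⟩ z₂ ⟨hc₂, hl₂⟩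
  obtain ⟨u, hu, h₁u, h₂u⟩ := directedOn_levelLt hdiag β z₁ hl₁ z₂ hl₂
  obtain ⟨j, h₁j, h₂j, hj⟩ := hjoin z₁ z₂
  have hjx : RelLt (KRel ρ) j (some (β, n', m')) :=
    ⟨hj _ hc₁.1.1 hc₂.1.1, fun h => lt_irrefl β (levelLt_of_krel (hj u h₁u h₂u) hu _ h)⟩
  exact (hc₁.eq_of_rel_of_relLt h₁j hjx).trans (hc₂.eq_of_rel_of_relLt h₂j hjx).symm

theorem relCovBy_same_level (hdiag : ∀ α n, ρ α α n = 0) {β : Omega1} {n m n' m' : ℕ}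
    (h : RelCovBy (KRel ρ) (some (β, n, m)) (some (β, n', m'))) :
    (n, m) = (n', m' - 1) ∨ (n, m) = (n' - 1, m') := by
  obtain ⟨-, hn, hm, -⟩ := krel_some_some.mp h.1.1
  have hne := h.1.2
  simp only [ne_eq, Option.some.injEq, Prod.mk.injEq, true_and] at hne
  rcases hm.lt_or_eq with hm | rfl
  · left
    have := h.eq_of_rel_of_relLt (c := some (β, n', m' - 1)) (by simp [hdiag]; omega)
      ⟨by simp [hdiag], by simp; omega⟩
    simp_all
  · right
    have := h.eq_of_rel_of_relLt (c := some (β, n' - 1, m)) (by simp [hdiag]; omega)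
      ⟨by simp [hdiag], by simp; omega⟩
    simp_all

theorem ncard_relCovBy_le_three (hdiag : ∀ α n, ρ α α n = 0)
    (hjoin : ∀ x y : KType, ∃ z, KRel ρ x z ∧ KRel ρ y z ∧
      ∀ w, KRel ρ x w → KRel ρ y w → KRel ρ z w) :
    ∀ x : KType, {z : KType | RelCovBy (KRel ρ) z x}.ncard ≤ 3
  | none => by
    have : {z : KType | RelCovBy (KRel ρ) z none} = ∅ :=
      Set.eq_empty_of_forall_notMem fun z hz => not_relLt_none z hz.1
    simp [this]
  | some (β, n', m') => by
    set A := {z : KType | RelCovBy (KRel ρ) z (some (β, n', m')) ∧ ∀ p ∈ z, p.1 < β}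
    have hA : A.Subsingleton := subsingleton_relCovBy_levelLt hdiag hjoin β n' m'
    have hsub : {z : KType | RelCovBy (KRel ρ) z (some (β, n', m'))} ⊆
        insert (some (β, n', m' - 1)) (insert (some (β, n' - 1, m')) A) := by
      rintro (_ | ⟨α, n, m⟩) hz
      · exact Or.inr (Or.inr ⟨hz, nofun⟩)
      rcases (krel_some_some.mp hz.1.1).1.lt_or_eq with hlt | rfl
      · exact Or.inr (Or.inr ⟨hz, by rintro _ ⟨⟩; exact hlt⟩)
      · rcases relCovBy_same_level hdiag hz with h | h <;> simp_all
    calc _ ≤ (insert (some (β, n', m' - 1)) (insert (some (β, n' - 1, m')) A)).ncard :=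
          Set.ncard_le_ncard hsub ((hA.finite.insert _).insert _)
      _ ≤ A.ncard + 1 + 1 := (Set.ncard_insert_le _ _).trans (by grw [Set.ncard_insert_le])
      _ ≤ 3 := by grw [(Set.ncard_le_one_iff hA.finite).2 (hA · ·)]

end KRel

/-- if `(K, ⊴_ρ)` is a lower finite join-semilattice, then it is
a 3-ladder. -/
theorem K_is_three_ladder (ρ : Omega1 → Omega1 → ℕ → ℕ)
    (hdiag : ∀ α : Omega1, ∀ n : ℕ, ρ α α n = 0)
    (hjoin : IsPartialOrder KType (KRel ρ) ∧
      ∀ x y : KType, ∃ z, KRel ρ x z ∧ KRel ρ y z ∧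
        ∀ w, KRel ρ x w → KRel ρ y w → KRel ρ z w)
    (hLF : ∀ x : KType, {y : KType | KRel ρ y x}.Finite) :
    RelIsNLadder (KRel ρ) 3 := by
  obtain ⟨hpo, hj⟩ := hjoin
  exact ⟨hpo, hj, exists_meet_of_lower_finite (krel_none_left (ρ := ρ)) hj hLF, hLF,
    ncard_relCovBy_le_three hdiag hj⟩
end
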